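/- Let p̃ be a 3-dimensional binary probability table with uniform margins such that p̃₀₁₀ = p̃₁₀₀ = 0 and p̃₀₀₁ p̃₁₁₁ = p̃₀₁₁ p̃₁₀₁. For real numbers α, β define the table p(α,β) by p₀₀₀ = p̃₀₀₀ − α, p₀₀₁ = p̃₀₀₁ + α + β, p₀₁₀ = p₁₀₀ = 0, p₀₁₁ = p̃₀₁₁ − β, p₁₀₁ = p̃₁₀₁ − β, p₁₁₀ = p̃₁₁₀ + α, p₁₁₁ = p̃₁₁₁ − α + β. Then (i) p(α,β) satisfies Σ_γ p(α,β)_γ = 1 and, for each i ∈ {1,2,3}, Σ_{γ : γ_i = 0} p(α,β)_γ = 1/2; and (ii) p₀₀₁ p₁₁₁ = p₀₁₁ p₁₀₁ holds for p(α,β) if and only if β = 2α(α − (p̃₁₁₁ − p̃₀₀₁)). -/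
import Mathlib


private lemma univ3 : (Finset.univ : Finset (Fin 3 → Fin 2)) =
    {![0,0,0],![0,0,1],![0,1,0],![0,1,1],![1,0,0],![1,0,1],![1,1,0],![1,1,1]} := by decide

private lemma sum8 (f : (Fin 3 → Fin 2) → ℝ) : ∑ γ, f γ =
    f ![0,0,0] + f ![0,0,1] + f ![0,1,0] + f ![0,1,1] + f ![1,0,0] + f ![1,0,1] + f ![1,1,0] + f ![1,1,1] := by
  rw [univ3]
  simp (config := {decide := true}) [Finset.sum_insert, Finset.mem_insert]
  ring

private lemma filt0 (f : (Fin 3 → Fin 2) → ℝ) :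
    ∑ γ ∈ Finset.univ.filter (fun γ : Fin 3 → Fin 2 => γ 0 = 0), f γ =
    f ![0,0,0] + f ![0,0,1] + f ![0,1,0] + f ![0,1,1] := by
  rw [univ3]
  simp (config := {decide := true}) [Finset.filter_insert, Finset.filter_singleton, Finset.sum_insert, Finset.mem_insert]
  ring

private lemma filt1 (f : (Fin 3 → Fin 2) → ℝ) :
    ∑ γ ∈ Finset.univ.filter (fun γ : Fin 3 → Fin 2 => γ 1 = 0), f γ =
    f ![0,0,0] + f ![0,0,1] + f ![1,0,0] + f ![1,0,1] := by
  rw [univ3]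
  simp (config := {decide := true}) [Finset.filter_insert, Finset.filter_singleton, Finset.sum_insert, Finset.mem_insert]
  ring

private lemma filt2 (f : (Fin 3 → Fin 2) → ℝ) :
    ∑ γ ∈ Finset.univ.filter (fun γ : Fin 3 → Fin 2 => γ 2 = 0), f γ =
    f ![0,0,0] + f ![0,1,0] + f ![1,0,0] + f ![1,1,0] := by
  rw [univ3]
  simp (config := {decide := true}) [Finset.filter_insert, Finset.filter_singleton, Finset.sum_insert, Finset.mem_insert]
  ring


/-- Perturbation of a table with uniform margins, zeros at `(0,1,0)` and
`(1,0,0)`, and conditional odds ratio `1` for the first two variables given the third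
equal to `1`: the perturbed table keeps total mass `1` and uniform margins, and keeps
odds ratio `1` iff `β = 2α(α − (p̃₁₁₁ − p̃₀₀₁))`. -/
theorem stmt_16 (pt : (Fin 3 → Fin 2) → ℝ)
    (hnn : ∀ γ, 0 ≤ pt γ) (hsum : ∑ γ, pt γ = 1)
    (hmarg : ∀ i : Fin 3,
      ∑ γ ∈ Finset.univ.filter (fun γ : Fin 3 → Fin 2 => γ i = 0), pt γ = 1 / 2)
    (h010 : pt ![0, 1, 0] = 0) (h100 : pt ![1, 0, 0] = 0)
    (hor : pt ![0, 0, 1] * pt ![1, 1, 1] = pt ![0, 1, 1] * pt ![1, 0, 1])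
    (a b : ℝ) (p : (Fin 3 → Fin 2) → ℝ)
    (hp : p = fun γ : Fin 3 → Fin 2 =>
      if γ = ![0, 0, 0] then pt ![0, 0, 0] - a
      else if γ = ![0, 0, 1] then pt ![0, 0, 1] + a + b
      else if γ = ![0, 1, 0] then 0
      else if γ = ![0, 1, 1] then pt ![0, 1, 1] - b
      else if γ = ![1, 0, 0] then 0
      else if γ = ![1, 0, 1] then pt ![1, 0, 1] - b
      else if γ = ![1, 1, 0] then pt ![1, 1, 0] + a
      else pt ![1, 1, 1] - a + b) :
    ((∑ γ, p γ = 1) ∧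
      (∀ i : Fin 3,
        ∑ γ ∈ Finset.univ.filter (fun γ : Fin 3 → Fin 2 => γ i = 0), p γ = 1 / 2)) ∧
    (p ![0, 0, 1] * p ![1, 1, 1] = p ![0, 1, 1] * p ![1, 0, 1] ↔
      b = 2 * a * (a - (pt ![1, 1, 1] - pt ![0, 0, 1]))) := by
  have e000 : p ![0,0,0] = pt ![0,0,0] - a := by
    rw [hp]; simp (config := {decide := true})
  have e001 : p ![0,0,1] = pt ![0,0,1] + a + b := by
    rw [hp]; simp (config := {decide := true})
  have e010 : p ![0,1,0] = 0 := by rw [hp]; simp (config := {decide := true})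
  have e011 : p ![0,1,1] = pt ![0,1,1] - b := by rw [hp]; simp (config := {decide := true})
  have e100 : p ![1,0,0] = 0 := by rw [hp]; simp (config := {decide := true})
  have e101 : p ![1,0,1] = pt ![1,0,1] - b := by rw [hp]; simp (config := {decide := true})
  have e110 : p ![1,1,0] = pt ![1,1,0] + a := by rw [hp]; simp (config := {decide := true})
  have e111 : p ![1,1,1] = pt ![1,1,1] - a + b := by rw [hp]; simp (config := {decide := true})
  have hs := hsum; rw [sum8] at hs
  have hm0 := hmarg 0; rw [filt0] at hm0
  have hm1 := hmarg 1; rw [filt1] at hm1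
  have hm2 := hmarg 2; rw [filt2] at hm2
  refine ⟨⟨?_, ?_⟩, ?_⟩
  · rw [sum8, e000, e001, e010, e011, e100, e101, e110, e111]
    linarith
  · intro i
    fin_cases i
    · show ∑ γ ∈ Finset.univ.filter (fun γ : Fin 3 → Fin 2 => γ 0 = 0), p γ = 1 / 2
      rw [filt0, e000, e001, e010, e011]; linarith
    · show ∑ γ ∈ Finset.univ.filter (fun γ : Fin 3 → Fin 2 => γ 1 = 0), p γ = 1 / 2
      rw [filt1, e000, e001, e100, e101]; linarith
    · show ∑ γ ∈ Finset.univ.filter (fun γ : Fin 3 → Fin 2 => γ 2 = 0), p γ = 1 / 2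
      rw [filt2, e000, e010, e100, e110]; linarith
  · rw [e001, e011, e101, e111]
    have hS : pt ![0,0,1] + pt ![0,1,1] + pt ![1,0,1] + pt ![1,1,1] = 1 / 2 := by linarith
    constructor <;> intro h
    · linear_combination 2*h - 2*hor - 2*b*hS
    · linear_combination hor + b*hS + (1/2)*h
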